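/- arXiv:1410.2190 — 3 statements merged into one kernel-verified Lean document; each statement's English description precedes it below -/
import Mathlib

section
/- Fix an integer k ≥ 3, d > 0 and β ≥ 0, and let m = ⌈dn/k⌉. There exist constants 0 < c < C and n0 such that for all n ≥ n0: c·2^n·(1 − 2^{1−k}(1 − e^{−β}))^m ≤ E[Z_β(H'_k(n,m))] ≤ C·2^n·(1 − 2^{1−k}(1 − e^{−β}))^m. -/
/-!
Averaging over the `m` independent edges factorises the expectation:
`E[Z_β] = ∑_τ (1 - (1 - e^{-β}) q(τ))^m`, where `q(τ)` is the fraction of `k`-sets that are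
monochromatic under `τ`. The average of `q` over all colorings is `2^{1-k}`, so Jensen's inequality
gives the lower bound with `c = 1`. Conversely `C(a,k) + C(n-a,k) ≥ 2^{1-k}(1 - 2k²/n) C(n,k)`, so
`q(τ) ≥ 2^{1-k}(1 - 2k²/n)` for every `τ`, and the resulting error factor `(1 + 2k²/n)^m` stays
bounded because `m = O(n)`.
-/

noncomputable section

open Finset Filter Real
open scoped Classical BigOperators

/-- The set of all `k`-element subsets of `Fin n` (the potential edges of a
`k`-uniform hypergraph on `[n]`). -/
def kSets (n k : ℕ) : Finset (Finset (Fin n)) :=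
  Finset.univ.filter fun e => e.card = k

/-- An edge is monochromatic under the 2-coloring `σ`. -/
def isMono {n : ℕ} (σ : Fin n → Bool) (e : Finset (Fin n)) : Prop :=
  ∀ v ∈ e, ∀ w ∈ e, σ v = σ w

/-- The number `E_H(σ)` of monochromatic edges of the hypergraph `H` under `σ`. -/
def monoCount {n : ℕ} (H : Finset (Finset (Fin n))) (σ : Fin n → Bool) : ℕ :=
  (H.filter fun e => isMono σ e).card

/-- The partition function `Z_β(H)`. -/
def Zp {n : ℕ} (β : ℝ) (H : Finset (Finset (Fin n))) : ℝ :=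
  ∑ τ : Fin n → Bool, Real.exp (-β * (monoCount H τ : ℝ))

/-- Probability of obtaining the hypergraph `H` in the binomial model `H_k(n,p)`. -/
def probHnp (n k : ℕ) (p : ℝ) (H : Finset (Finset (Fin n))) : ℝ :=
  if H ⊆ kSets n k then p ^ H.card * (1 - p) ^ ((kSets n k).card - H.card) else 0

/-- Expectation of `f` over `H_k(n,p)`. -/
def expHnp (n k : ℕ) (p : ℝ) (f : Finset (Finset (Fin n)) → ℝ) : ℝ :=
  ∑ H : Finset (Finset (Fin n)), probHnp n k p H * f H

/-- Probability of an event under `H_k(n,p)`. -/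
def prHnp (n k : ℕ) (p : ℝ) (A : Finset (Finset (Fin n)) → Prop) : ℝ :=
  expHnp n k p fun H => if A H then 1 else 0

/-- The edge probability `p = d / C(n-1,k-1)`. -/
def pEdge (n k : ℕ) (d : ℝ) : ℝ := d / ((n - 1).choose (k - 1) : ℝ)

/-- The first-moment value `ln 2 + (d/k)·ln(1 − 2^{1−k}(1 − e^{−β}))`. -/
def phiBound (k : ℕ) (d β : ℝ) : ℝ :=
  Real.log 2 + d / k * Real.log (1 - (2:ℝ) ^ ((1:ℤ) - k) * (1 - Real.exp (-β)))

/-- The sequence `n ↦ (1/n)·E[ln Z_β(H_k(n,p))]` with `p = d/C(n-1,k-1)`. -/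
def freeEnergySeq (k : ℕ) (d β : ℝ) (n : ℕ) : ℝ :=
  expHnp n k (pEdge n k d) (fun H => Real.log (Zp β H)) / n

/-- The function `Σ_{k,d}(β)`. -/
def SigmaKD (k : ℕ) (d β : ℝ) : ℝ :=
  (β + 1) * Real.exp (-β + k * Real.log 2) * Real.log 2
    - 2 * (d / k - (2:ℝ) ^ (k - 1) * Real.log 2 + Real.log 2)

/-- `m = ⌈dn/k⌉`. -/
def mOf (d : ℝ) (k n : ℕ) : ℕ := ⌈d * n / (k:ℝ)⌉₊

/-- Number of monochromatic edges, with multiplicity, of a multi-hypergraph given as a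
tuple of `m` edges. -/
def monoCountM {n m : ℕ} (H : Fin m → Finset (Fin n)) (σ : Fin n → Bool) : ℕ :=
  (Finset.univ.filter fun i : Fin m => isMono σ (H i)).card

/-- Partition function of a multi-hypergraph. -/
def ZpM {n m : ℕ} (β : ℝ) (H : Fin m → Finset (Fin n)) : ℝ :=
  ∑ τ : Fin n → Bool, Real.exp (-β * (monoCountM H τ : ℝ))

/-- Expectation over `H'_k(n,m)`: `m` edges chosen uniformly and independently with
replacement from all `k`-subsets of `[n]`. -/
def expHM (n k m : ℕ) (f : (Fin m → Finset (Fin n)) → ℝ) : ℝ :=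
  ∑ H : Fin m → Finset (Fin n),
    (∏ i : Fin m, if H i ∈ kSets n k then ((kSets n k).card : ℝ)⁻¹ else 0) * f H

/-- Probability of `H` under `H_k(n,m)`: `m` distinct edges chosen uniformly without
replacement. -/
def probHnm (n k m : ℕ) (H : Finset (Finset (Fin n))) : ℝ :=
  if H ⊆ kSets n k ∧ H.card = m then ((kSets n k).card.choose m : ℝ)⁻¹ else 0

/-- Expectation of `f` over `H_k(n,m)`. -/
def expHnm (n k m : ℕ) (f : Finset (Finset (Fin n)) → ℝ) : ℝ :=
  ∑ H : Finset (Finset (Fin n)), probHnm n k m H * f H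

/-- Number of vertices with color `true` (i.e. `|σ⁻¹(1)|`). -/
def numPlus {n : ℕ} (σ : Fin n → Bool) : ℕ :=
  (Finset.univ.filter fun v => σ v = true).card

/-- A coloring is balanced if `||σ⁻¹(1)| − n/2| ≤ √n`. -/
def isBalanced {n : ℕ} (σ : Fin n → Bool) : Prop :=
  |(numPlus σ : ℝ) - n / 2| ≤ Real.sqrt n

/-- The overlap `⟨σ,τ⟩ = ∑_v σ(v)τ(v)`. -/
def overlap {n : ℕ} (σ τ : Fin n → Bool) : ℤ :=
  ∑ _v ∈ Finset.univ.filter (fun v : Fin n => σ v = τ v), (1:ℤ) +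
    ∑ _v ∈ Finset.univ.filter (fun v : Fin n => σ v ≠ τ v), (-1:ℤ)

/-- The cluster size `C_β(H,σ)`. -/
def clusterSize {n : ℕ} (β : ℝ) (H : Finset (Finset (Fin n))) (σ : Fin n → Bool) : ℝ :=
  ∑ τ : Fin n → Bool,
    if 2 * (n:ℝ) / 3 ≤ (overlap σ τ : ℝ) then Real.exp (-β * (monoCount H τ : ℝ)) else 0

/-- The entropy function `H(z)`. -/
def entH (z : ℝ) : ℝ := -z * Real.log z - (1 - z) * Real.log (1 - z)

/-- The second-moment exponent `Λ_β(α)`. -/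
def Lam (k : ℕ) (d β α : ℝ) : ℝ :=
  entH ((1 + α) / 2) +
    d / k * Real.log (1 - (2:ℝ) ^ ((1:ℤ) - k) * (1 - Real.exp (-β)) *
      (2 - (1 - Real.exp (-β)) * ((1 + α) ^ k + (1 - α) ^ k) / 2 ^ k))

/-- The pair partition function `Z_β(α)` with `α = 2ν/n − 1`, i.e. overlap `2ν − n`. -/
def Zpair {n m : ℕ} (β : ℝ) (ν : ℕ) (H : Fin m → Finset (Fin n)) : ℝ :=
  ∑ σ : Fin n → Bool, ∑ τ : Fin n → Bool,
    if isBalanced σ ∧ isBalanced τ ∧ overlap σ τ = 2 * (ν:ℤ) - (n:ℤ) then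
      Real.exp (-β * ((monoCountM H σ : ℝ) + (monoCountM H τ : ℝ)))
    else 0

/-- Partition function of a multi-hypergraph restricted to balanced colorings. -/
def ZpMbal {n m : ℕ} (β : ℝ) (H : Fin m → Finset (Fin n)) : ℝ :=
  ∑ τ : Fin n → Bool,
    if isBalanced τ then Real.exp (-β * (monoCountM H τ : ℝ)) else 0

/-- `m₀ = 2^{1−k}·e^{−β}·m/(1 − 2^{1−k}(1 − e^{−β}))`. -/
def m0Of (k : ℕ) (β : ℝ) (m : ℕ) : ℝ :=
  (2:ℝ) ^ ((1:ℤ) - k) * Real.exp (-β) * m / (1 - (2:ℝ) ^ ((1:ℤ) - k) * (1 - Real.exp (-β)))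

/-- The probability `p₁` of a monochromatic edge in the planted model. -/
def p1Planted (n k : ℕ) (d β : ℝ) : ℝ :=
  Real.exp (-β) * d /
    ((1 - (2:ℝ) ^ ((1:ℤ) - k) * (1 - Real.exp (-β))) * ((n - 1).choose (k - 1) : ℝ))

/-- The probability `p₂` of a bichromatic edge in the planted model. -/
def p2Planted (n k : ℕ) (d β : ℝ) : ℝ :=
  d / ((1 - (2:ℝ) ^ ((1:ℤ) - k) * (1 - Real.exp (-β))) * ((n - 1).choose (k - 1) : ℝ))

/-- Conditional probability of the hypergraph `H` in the planted model given the planted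
coloring `σ`: monochromatic edges appear with probability `q1`, bichromatic ones with `q2`. -/
def probPlanted (n k : ℕ) (q1 q2 : ℝ) (σ : Fin n → Bool)
    (H : Finset (Finset (Fin n))) : ℝ :=
  if H ⊆ kSets n k then
    (∏ e ∈ (kSets n k).filter (fun e => isMono σ e), if e ∈ H then q1 else 1 - q1) *
      ∏ e ∈ (kSets n k).filter (fun e => ¬ isMono σ e), if e ∈ H then q2 else 1 - q2
  else 0

/-- Probability of an event in the planted model `(σ̂, G)`. -/
def prPlanted (n k : ℕ) (q1 q2 : ℝ)
    (A : (Fin n → Bool) → Finset (Finset (Fin n)) → Prop) : ℝ :=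
  ∑ σ : Fin n → Bool, ∑ H : Finset (Finset (Fin n)),
    ((2:ℝ)⁻¹) ^ n * probPlanted n k q1 q2 σ H * (if A σ H then 1 else 0)

/-- `β_crit(d,k)`, as an extended real (so `⊤ = ∞` if the set is empty). -/
def betaCrit (k : ℕ) (d : ℝ) : EReal :=
  sInf ((fun β : ℝ => (β : EReal)) ''
    {β : ℝ | 0 < β ∧ limsup (freeEnergySeq k d β) atTop < phiBound k d β})

/-- `v` supports the edge `e`: `v ∈ e` and every other vertex of `e` has color `−σ(v)`. -/
def supportsEdge {n : ℕ} (σ : Fin n → Bool) (v : Fin n) (e : Finset (Fin n)) : Prop :=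
  v ∈ e ∧ ∀ w ∈ e, w ≠ v → σ w = !(σ v)

/-- An edge `e` is `U`-endangered: all vertices of `U ∩ e` have the same color. -/
def endangered {n : ℕ} (σ : Fin n → Bool) (U : Finset (Fin n)) (e : Finset (Fin n)) : Prop :=
  ∀ v ∈ U ∩ e, ∀ w ∈ U ∩ e, σ v = σ w

/-- A set `V'` satisfying the two core conditions CR1 and CR2. -/
def goodSet {n : ℕ} (H : Finset (Finset (Fin n))) (σ : Fin n → Bool)
    (V' : Finset (Fin n)) : Prop :=
  (∀ v ∈ V', 100 ≤ (H.filter fun e => supportsEdge σ v e ∧ e ⊆ V').card) ∧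
    ∀ v ∈ V', (H.filter fun e => v ∈ e ∧ endangered σ V' e).card ≤ 10

/-- The core: the largest set satisfying CR1 and CR2 (the union of all such sets). -/
def coreSet {n : ℕ} (H : Finset (Finset (Fin n))) (σ : Fin n → Bool) : Finset (Fin n) :=
  Finset.univ.filter fun v => ∃ V', goodSet H σ V' ∧ v ∈ V'

/-- The backbone: vertices outside the core supporting an edge into the core and occurring
in no `({v} ∪ core)`-endangered edge. -/
def backboneSet {n : ℕ} (H : Finset (Finset (Fin n))) (σ : Fin n → Bool) : Finset (Fin n) :=
  Finset.univ.filter fun v => v ∉ coreSet H σ ∧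
    (∃ e ∈ H, supportsEdge σ v e ∧ e \ {v} ⊆ coreSet H σ) ∧
    ∀ e ∈ H, v ∈ e → ¬ endangered σ (insert v (coreSet H σ)) e

/-- The remaining vertices. -/
def restSet {n : ℕ} (H : Finset (Finset (Fin n))) (σ : Fin n → Bool) : Finset (Fin n) :=
  Finset.univ \ (coreSet H σ ∪ backboneSet H σ)

/-- The free vertices: vertices of the rest all of whose edges meet the core in a
bichromatic set. -/
def freeSet {n : ℕ} (H : Finset (Finset (Fin n))) (σ : Fin n → Bool) : Finset (Fin n) :=
  (restSet H σ).filter fun v => ∀ e ∈ H, v ∈ e →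
    ∃ w1 ∈ e ∩ coreSet H σ, ∃ w2 ∈ e ∩ coreSet H σ, σ w1 ≠ σ w2

theorem card_mul_pow_le_sum_pow {ι : Type*} [Fintype ι] {f : ι → ℝ} {a : ℝ}
    (hf : ∀ i, 0 ≤ f i) (ha : 0 ≤ a) (hsum : Fintype.card ι * a ≤ ∑ i, f i) (m : ℕ) :
    Fintype.card ι * a ^ m ≤ ∑ i, f i ^ m := by
  rcases (Fintype.card ι).eq_zero_or_pos with h0 | hpos
  · rw [h0, Nat.cast_zero, zero_mul]
    exact Finset.sum_nonneg fun i _ => pow_nonneg (hf i) m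
  have hcard : (0:ℝ) < Fintype.card ι := by exact_mod_cast hpos
  have hw : ∑ _i : ι, (Fintype.card ι : ℝ)⁻¹ = 1 := by
    rw [Finset.sum_const, Finset.card_univ, nsmul_eq_mul, mul_inv_cancel₀ hcard.ne']
  have hjensen := Real.pow_arith_mean_le_arith_mean_pow Finset.univ
    (fun _ => (Fintype.card ι : ℝ)⁻¹) f (fun _ _ => by positivity) hw (fun i _ => hf i) m
  rw [← Finset.mul_sum, ← Finset.mul_sum, ← div_eq_inv_mul, ← div_eq_inv_mul,
    le_div_iff₀' hcard] at hjensen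
  calc (Fintype.card ι : ℝ) * a ^ m
        ≤ Fintype.card ι * ((∑ i, f i) / Fintype.card ι) ^ m := by
        gcongr
        rwa [le_div_iff₀' hcard]
    _ ≤ ∑ i, f i ^ m := hjensen

theorem one_sub_mul_choose_le_two_pow_mul_choose_add_choose {k a b : ℕ} (hk : 1 ≤ k) :
    (1 - 2 * (k:ℝ) ^ 2 / (a + b : ℕ)) * ((a + b).choose k : ℝ)
      ≤ 2 ^ (k - 1) * ((a.choose k : ℝ) + b.choose k) := by
  set n := a + b
  by_cases ht : 1 - 2 * (k:ℝ) ^ 2 / n ≤ 0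
  · exact (mul_nonpos_of_nonpos_of_nonneg ht (Nat.cast_nonneg _)).trans (by positivity)
  push Not at ht
  rcases Nat.eq_zero_or_pos n with h0 | hpos
  · rw [h0, Nat.choose_eq_zero_of_lt (by omega)]
    simp only [Nat.cast_zero, mul_zero]
    positivity
  have hnR : (0:ℝ) < n := by exact_mod_cast hpos
  have hkn : 2 * (k:ℝ) ≤ n := by
    have hk1 : (1:ℝ) ≤ k := by exact_mod_cast hk
    rw [sub_pos, div_lt_one hnR] at ht
    nlinarith
  -- `x ^ k ≤ k! C(a,k)` and `y ^ k ≤ k! C(b,k)`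
  set x := a + 1 - k
  set y := b + 1 - k
  have hxy : (n:ℝ) - 2 * k ≤ x + y := by
    have : n + 2 ≤ x + y + 2 * k := by omega
    have := (Nat.cast_le (α := ℝ)).2 this
    push_cast at this
    linarith
  have hBernoulli : (1 - 2 * (k:ℝ) ^ 2 / n) * (n:ℝ) ^ k ≤ ((n:ℝ) - 2 * k) ^ k := by
    have h := one_add_mul_le_pow (a := -(2 * (k:ℝ) / n))
      (by rw [neg_le_neg_iff, div_le_iff₀ hnR]; linarith) k
    calc (1 - 2 * (k:ℝ) ^ 2 / n) * (n:ℝ) ^ k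
          = (1 + k * -(2 * (k:ℝ) / n)) * (n:ℝ) ^ k := by ring
      _ ≤ (1 + -(2 * (k:ℝ) / n)) ^ k * (n:ℝ) ^ k := by gcongr
      _ = ((n:ℝ) - 2 * k) ^ k := by
        rw [← mul_pow]
        congr 1
        field_simp
        ring
  have hfact : (0:ℝ) < k.factorial := by exact_mod_cast k.factorial_pos
  have hdesc : ∀ c : ℕ, (k.factorial : ℝ) * c.choose k = c.descFactorial k := fun c => by
    exact_mod_cast (Nat.descFactorial_eq_factorial_mul_choose c k).symm
  rw [← mul_le_mul_iff_right₀ hfact]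
  calc (k.factorial : ℝ) * ((1 - 2 * (k:ℝ) ^ 2 / n) * (n.choose k : ℝ))
      = (1 - 2 * (k:ℝ) ^ 2 / n) * n.descFactorial k := by rw [← hdesc]; ring
    _ ≤ (1 - 2 * (k:ℝ) ^ 2 / n) * (n:ℝ) ^ k := by
        gcongr
        exact_mod_cast Nat.descFactorial_le_pow n k
    _ ≤ ((x:ℝ) + y) ^ k := hBernoulli.trans (by gcongr)
    _ ≤ 2 ^ (k - 1) * ((x:ℝ) ^ k + (y:ℝ) ^ k) := add_pow_le (by positivity) (by positivity) k
    _ ≤ 2 ^ (k - 1) * ((a.descFactorial k : ℝ) + b.descFactorial k) := by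
        gcongr <;> exact_mod_cast Nat.pow_sub_le_descFactorial _ k
    _ = (k.factorial : ℝ) * (2 ^ (k - 1) * ((a.choose k : ℝ) + b.choose k)) := by
        rw [← hdesc, ← hdesc]
        ring

theorem card_kSets (n k : ℕ) : (kSets n k).card = n.choose k := by
  have : kSets n k = Finset.powersetCard k Finset.univ := by
    ext e
    simp [kSets]
  rw [this, Finset.card_powersetCard, Finset.card_univ, Fintype.card_fin]

section RandomMultiHypergraph

variable {n k m : ℕ}

theorem expHM_sum {ι : Type*} (s : Finset ι) (F : ι → (Fin m → Finset (Fin n)) → ℝ) :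
    expHM n k m (fun H => ∑ i ∈ s, F i H) = ∑ i ∈ s, expHM n k m (F i) := by
  simp only [expHM, Finset.mul_sum]
  exact Finset.sum_comm

theorem expHM_prod (g : Finset (Fin n) → ℝ) :
    expHM n k m (fun H => ∏ i, g (H i)) =
      (((kSets n k).card : ℝ)⁻¹ * ∑ e ∈ kSets n k, g e) ^ m := by
  have hmean : ∑ e, (if e ∈ kSets n k then ((kSets n k).card : ℝ)⁻¹ else 0) * g e
      = ((kSets n k).card : ℝ)⁻¹ * ∑ e ∈ kSets n k, g e := by
    simp only [ite_mul, zero_mul, Finset.sum_ite_mem, Finset.univ_inter, Finset.mul_sum]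
  rw [expHM, ← hmean, ← Fin.prod_const, Finset.prod_univ_sum, Fintype.piFinset_univ]
  simp only [Finset.prod_mul_distrib]

theorem exp_neg_mul_monoCountM (β : ℝ) (H : Fin m → Finset (Fin n)) (τ : Fin n → Bool) :
    Real.exp (-β * monoCountM H τ) = ∏ i, if isMono τ (H i) then Real.exp (-β) else 1 := by
  rw [Finset.prod_ite, Finset.prod_const_one, mul_one, Finset.prod_const, ← Real.exp_nat_mul,
    monoCountM, mul_comm]

theorem expHM_ZpM (β : ℝ) :
    expHM n k m (ZpM β) = ∑ τ : Fin n → Bool,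
      (((kSets n k).card : ℝ)⁻¹ *
        ∑ e ∈ kSets n k, if isMono τ e then Real.exp (-β) else 1) ^ m := by
  have hZ : ZpM (m := m) β = fun H => ∑ τ : Fin n → Bool,
      ∏ i, if isMono τ (H i) then Real.exp (-β) else 1 :=
    funext fun H => Finset.sum_congr rfl fun τ _ => exp_neg_mul_monoCountM β H τ
  rw [hZ, expHM_sum]
  exact Finset.sum_congr rfl fun τ _ =>
    expHM_prod fun e => if isMono τ e then Real.exp (-β) else 1

end RandomMultiHypergraph

def monoFraction (k : ℕ) {n : ℕ} (τ : Fin n → Bool) : ℝ :=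
  (monoCount (kSets n k) τ : ℝ) / (kSets n k).card

section MonochromaticEdges

variable {n k : ℕ}

theorem monoFraction_nonneg (τ : Fin n → Bool) : 0 ≤ monoFraction k τ := by
  unfold monoFraction
  positivity

theorem monoFraction_le_one (τ : Fin n → Bool) : monoFraction k τ ≤ 1 :=
  div_le_one_of_le₀ (mod_cast Finset.card_filter_le _ _) (Nat.cast_nonneg _)

theorem mean_ite_isMono (hkn : k ≤ n) (a : ℝ) (τ : Fin n → Bool) :
    ((kSets n k).card : ℝ)⁻¹ * ∑ e ∈ kSets n k, (if isMono τ e then a else 1)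
      = 1 - (1 - a) * monoFraction k τ := by
  have hN : ((kSets n k).card : ℝ) ≠ 0 := by
    rw [card_kSets]
    exact_mod_cast (Nat.choose_pos hkn).ne'
  have hite : ∀ e,
      (if isMono τ e then a else 1) = 1 - (1 - a) * (if isMono τ e then 1 else 0) := by
    intro e
    split_ifs <;> ring
  simp only [hite, Finset.sum_sub_distrib, ← Finset.mul_sum, Finset.sum_boole, Finset.sum_const,
    nsmul_eq_mul, mul_one, monoFraction, monoCount]
  field_simp

theorem card_filter_isMono_le {e : Finset (Fin n)} (he : e.Nonempty) :
    (Finset.univ.filter fun τ : Fin n → Bool => isMono τ e).card ≤ 2 * 2 ^ (n - e.card) := by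
  obtain ⟨v, hv⟩ := he
  let restrict : (Fin n → Bool) → Bool × ({x : Fin n // x ∉ e} → Bool) :=
    fun τ => (τ v, fun x => τ x)
  have hinj : Set.InjOn restrict (Finset.univ.filter fun τ : Fin n → Bool => isMono τ e) := by
    intro τ₁ h₁ τ₂ h₂ heq
    simp only [Finset.coe_filter, Finset.mem_univ, true_and, Set.mem_ofPred_eq] at h₁ h₂
    funext x
    by_cases hx : x ∈ e
    · rw [h₁ x hx v hv, h₂ x hx v hv]
      exact congrArg Prod.fst heq
    · exact congrFun (congrArg Prod.snd heq) ⟨x, hx⟩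
  calc _ ≤ (Finset.univ : Finset (Bool × ({x : Fin n // x ∉ e} → Bool))).card :=
        Finset.card_le_card_of_injOn restrict (fun _ _ => Finset.mem_coe.2 (Finset.mem_univ _)) hinj
    _ = 2 * 2 ^ (n - e.card) := by
        simp [Fintype.card_subtype_compl]

theorem sum_monoCount_le (hk : 1 ≤ k) :
    ∑ τ : Fin n → Bool, monoCount (kSets n k) τ ≤ (kSets n k).card * (2 * 2 ^ (n - k)) := by
  calc ∑ τ : Fin n → Bool, monoCount (kSets n k) τ
      = ∑ e ∈ kSets n k, (Finset.univ.filter fun τ : Fin n → Bool => isMono τ e).card := by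
        simp only [monoCount, Finset.card_filter]
        exact Finset.sum_comm
    _ ≤ ∑ _e ∈ kSets n k, 2 * 2 ^ (n - k) := Finset.sum_le_sum fun e he => by
        have hcard : e.card = k := (Finset.mem_filter.1 he).2
        simpa [hcard] using card_filter_isMono_le (Finset.card_pos.1 (by omega : 0 < e.card))
    _ = (kSets n k).card * (2 * 2 ^ (n - k)) := by rw [Finset.sum_const, smul_eq_mul]

theorem sum_monoFraction_le (hk : 1 ≤ k) (hkn : k ≤ n) :
    ∑ τ : Fin n → Bool, monoFraction k τ ≤ 2 ^ n * (2:ℝ) ^ ((1:ℤ) - k) := by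
  have hN : (0:ℝ) < (kSets n k).card := by
    rw [card_kSets]
    exact_mod_cast Nat.choose_pos hkn
  have hpow : (2:ℝ) ^ n * (2:ℝ) ^ ((1:ℤ) - k) = 2 * 2 ^ (n - k) := by
    rw [← zpow_natCast, ← zpow_add₀ two_ne_zero, ← pow_succ', ← zpow_natCast]
    congr 1
    omega
  rw [hpow]
  simp only [monoFraction]
  rw [← Finset.sum_div, div_le_iff₀ hN, mul_comm]
  exact_mod_cast sum_monoCount_le hk

theorem powersetCard_colorClass_subset (τ : Fin n → Bool) (c : Bool) :
    Finset.powersetCard k (Finset.univ.filter fun v => τ v = c)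
      ⊆ (kSets n k).filter fun e => isMono τ e := by
  intro e he
  rw [Finset.mem_powersetCard] at he
  simp only [kSets, Finset.mem_filter, Finset.mem_univ, true_and, he.2]
  intro v hv w hw
  rw [(Finset.mem_filter.1 (he.1 hv)).2, (Finset.mem_filter.1 (he.1 hw)).2]

theorem choose_numPlus_add_choose_le_monoCount (hk : 1 ≤ k) (τ : Fin n → Bool) :
    (numPlus τ).choose k + (n - numPlus τ).choose k ≤ monoCount (kSets n k) τ := by
  have hdisj : Disjoint (Finset.powersetCard k (Finset.univ.filter fun v => τ v = true))
      (Finset.powersetCard k (Finset.univ.filter fun v => τ v = false)) := by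
    rw [Finset.disjoint_left]
    intro e h₁ h₂
    obtain ⟨v, hv⟩ := Finset.card_pos.1 ((Finset.mem_powersetCard.1 h₁).2 ▸ hk)
    have := (Finset.mem_filter.1 ((Finset.mem_powersetCard.1 h₁).1 hv)).2
    simp_all [(Finset.mem_filter.1 ((Finset.mem_powersetCard.1 h₂).1 hv)).2]
  have hfalse : (Finset.univ.filter fun v => τ v = false).card = n - numPlus τ := by
    have := Finset.card_filter_add_card_filter_not (s := Finset.univ) (fun v : Fin n => τ v = true)
    simp only [Finset.card_univ, Fintype.card_fin, Bool.not_eq_true] at this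
    rw [numPlus]
    omega
  have := Finset.card_le_card (Finset.union_subset (powersetCard_colorClass_subset (k := k) τ true)
    (powersetCard_colorClass_subset (k := k) τ false))
  rwa [Finset.card_union_of_disjoint hdisj, Finset.card_powersetCard, Finset.card_powersetCard,
    hfalse] at this

theorem le_monoFraction (hk : 1 ≤ k) (hkn : k ≤ n) (τ : Fin n → Bool) :
    (2:ℝ) ^ ((1:ℤ) - k) * (1 - 2 * (k:ℝ) ^ 2 / n) ≤ monoFraction k τ := by
  have hN : (0:ℝ) < n.choose k := by exact_mod_cast Nat.choose_pos hkn
  have hsplit : numPlus τ + (n - numPlus τ) = n := by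
    have : numPlus τ ≤ n := (Finset.card_filter_le _ _).trans_eq (by simp)
    omega
  have hchoose := one_sub_mul_choose_le_two_pow_mul_choose_add_choose
    (a := numPlus τ) (b := n - numPlus τ) hk
  rw [hsplit] at hchoose
  have hmono :
      ((numPlus τ).choose k : ℝ) + (n - numPlus τ).choose k ≤ monoCount (kSets n k) τ := by
    exact_mod_cast choose_numPlus_add_choose_le_monoCount hk τ
  have h2 : (2:ℝ) ^ ((1:ℤ) - k) * 2 ^ (k - 1) = 1 := by
    rw [← zpow_natCast, ← zpow_add₀ two_ne_zero]
    simp [Nat.cast_sub hk]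
  rw [monoFraction, card_kSets, le_div_iff₀ hN]
  calc (2:ℝ) ^ ((1:ℤ) - k) * (1 - 2 * (k:ℝ) ^ 2 / n) * n.choose k
      = (2:ℝ) ^ ((1:ℤ) - k) * ((1 - 2 * (k:ℝ) ^ 2 / n) * n.choose k) := by ring
    _ ≤ (2:ℝ) ^ ((1:ℤ) - k) *
          (2 ^ (k - 1) * (((numPlus τ).choose k : ℝ) + (n - numPlus τ).choose k)) := by
        gcongr
    _ ≤ monoCount (kSets n k) τ := by rw [← mul_assoc, h2, one_mul]; exact hmono

end MonochromaticEdges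

section PartitionFunctionMoment

variable {n k : ℕ} {β : ℝ}

theorem expHM_ZpM_eq_sum_pow (hkn : k ≤ n) (m : ℕ) :
    expHM n k m (ZpM β) =
      ∑ τ : Fin n → Bool, (1 - (1 - Real.exp (-β)) * monoFraction k τ) ^ m := by
  simp only [expHM_ZpM, mean_ite_isMono hkn]

theorem two_zpow_one_sub_le_inv_two (hk : 2 ≤ k) : (2:ℝ) ^ ((1:ℤ) - k) ≤ 2⁻¹ := by
  rw [← zpow_neg_one]
  exact zpow_le_zpow_right₀ one_le_two (by omega)

theorem one_sub_exp_neg_mem_Icc (hβ : 0 ≤ β) : 1 - Real.exp (-β) ∈ Set.Icc 0 1 :=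
  ⟨sub_nonneg.2 (Real.exp_le_one_iff.2 (by linarith)), by linarith [Real.exp_pos (-β)]⟩

theorem inv_two_le_one_sub_two_zpow_mul (hk : 2 ≤ k) (hβ : 0 ≤ β) :
    2⁻¹ ≤ 1 - (2:ℝ) ^ ((1:ℤ) - k) * (1 - Real.exp (-β)) := by
  obtain ⟨hw0, hw1⟩ := one_sub_exp_neg_mem_Icc hβ
  nlinarith [two_zpow_one_sub_le_inv_two hk]

theorem two_pow_mul_pow_le_expHM_ZpM (hk : 2 ≤ k) (hkn : k ≤ n) (hβ : 0 ≤ β) (m : ℕ) :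
    2 ^ n * (1 - (2:ℝ) ^ ((1:ℤ) - k) * (1 - Real.exp (-β))) ^ m ≤ expHM n k m (ZpM β) := by
  obtain ⟨hw0, hw1⟩ := one_sub_exp_neg_mem_Icc hβ
  have hcard : (Fintype.card (Fin n → Bool) : ℝ) = 2 ^ n := by simp
  rw [expHM_ZpM_eq_sum_pow hkn, ← hcard]
  refine card_mul_pow_le_sum_pow (fun τ => ?_) ?_ ?_ m
  · nlinarith [monoFraction_le_one (k := k) τ, monoFraction_nonneg (k := k) τ]
  · linarith [inv_two_le_one_sub_two_zpow_mul hk hβ]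
  · rw [Finset.sum_sub_distrib, ← Finset.mul_sum, Finset.sum_const, Finset.card_univ, hcard,
      nsmul_eq_mul, mul_one]
    nlinarith [sum_monoFraction_le (n := n) (by omega) hkn]

theorem expHM_ZpM_le (hk : 2 ≤ k) (hkn : k ≤ n) (hβ : 0 ≤ β) (m : ℕ) :
    expHM n k m (ZpM β) ≤
      2 ^ n * (1 - (2:ℝ) ^ ((1:ℤ) - k) * (1 - Real.exp (-β))) ^ m *
        Real.exp (2 * k ^ 2 * m / n) := by
  set A := 1 - (2:ℝ) ^ ((1:ℤ) - k) * (1 - Real.exp (-β))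
  set t : ℝ := 2 * k ^ 2 / n
  obtain ⟨hw0, hw1⟩ := one_sub_exp_neg_mem_Icc hβ
  have hA : 2⁻¹ ≤ A := inv_two_le_one_sub_two_zpow_mul hk hβ
  have ht : 0 ≤ t := by positivity
  have hterm : ∀ τ : Fin n → Bool, (1 - (1 - Real.exp (-β)) * monoFraction k τ) ^ m
      ≤ A ^ m * Real.exp (2 * k ^ 2 * m / n) := by
    intro τ
    have hq := le_monoFraction (by omega) hkn τ
    calc (1 - (1 - Real.exp (-β)) * monoFraction k τ) ^ m ≤ (A * (1 + t)) ^ m := by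
          gcongr
          · nlinarith [monoFraction_le_one (k := k) τ]
          -- `2^{1-k} (1 - e^{-β}) ≤ 1/2 ≤ A`
          · nlinarith [mul_le_mul_of_nonneg_left hq hw0]
      _ ≤ (A * Real.exp t) ^ m := by
          have : 1 + t ≤ Real.exp t := by linarith [Real.add_one_le_exp t]
          gcongr
      _ = A ^ m * Real.exp (2 * k ^ 2 * m / n) := by
          rw [mul_pow, ← Real.exp_nat_mul]
          congr 2
          ring
  rw [expHM_ZpM_eq_sum_pow hkn, mul_assoc]
  calc _ ≤ ∑ _τ : Fin n → Bool, A ^ m * Real.exp (2 * k ^ 2 * m / n) :=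
        Finset.sum_le_sum fun τ _ => hterm τ
    _ = _ := by simp

end PartitionFunctionMoment

theorem mOf_le {d : ℝ} (hd : 0 ≤ d) {k n : ℕ} (hk : 1 ≤ k) (hn : 1 ≤ n) :
    (mOf d k n : ℝ) ≤ (d + 1) * n := by
  have hkR : (1:ℝ) ≤ k := by exact_mod_cast hk
  have hnR : (1:ℝ) ≤ n := by exact_mod_cast hn
  have hdiv : d * n / k ≤ d * n := div_le_self (by positivity) hkR
  have := Nat.ceil_lt_add_one (show 0 ≤ d * n / k by positivity)
  rw [mOf]
  nlinarith

theorem statement_5 (k : ℕ) (hk : 3 ≤ k) (d β : ℝ) (hd : 0 < d) (hβ : 0 ≤ β) :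
    ∃ c C : ℝ, 0 < c ∧ c < C ∧ ∃ n0 : ℕ, ∀ n : ℕ, n0 ≤ n →
      c * 2 ^ n * (1 - (2:ℝ) ^ ((1:ℤ) - k) * (1 - Real.exp (-β))) ^ mOf d k n
          ≤ expHM n k (mOf d k n) (ZpM β) ∧
        expHM n k (mOf d k n) (ZpM β)
          ≤ C * 2 ^ n * (1 - (2:ℝ) ^ ((1:ℤ) - k) * (1 - Real.exp (-β))) ^ mOf d k n := by
  set A := 1 - (2:ℝ) ^ ((1:ℤ) - k) * (1 - Real.exp (-β))
  set K := Real.exp (2 * k ^ 2 * (d + 1))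
  have hK : 1 ≤ K := Real.one_le_exp (by positivity)
  refine ⟨1, 2 * K, one_pos, by linarith, k, fun n hkn => ⟨?_, ?_⟩⟩
  · rw [one_mul]
    exact two_pow_mul_pow_le_expHM_ZpM (by omega) hkn hβ _
  have hn : (0:ℝ) < n := by exact_mod_cast (show 0 < n by omega)
  have hexp : Real.exp (2 * k ^ 2 * mOf d k n / n) ≤ K := by
    refine Real.exp_le_exp.2 ((div_le_iff₀ hn).2 ?_)
    calc 2 * k ^ 2 * (mOf d k n : ℝ) ≤ 2 * k ^ 2 * ((d + 1) * n) := by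
          gcongr
          exact mOf_le hd.le (by omega) (by omega)
      _ = 2 * k ^ 2 * (d + 1) * n := by ring
  have hA : 0 ≤ A ^ mOf d k n :=
    pow_nonneg (le_trans (by norm_num) (inv_two_le_one_sub_two_zpow_mul (by omega) hβ)) _
  calc expHM n k (mOf d k n) (ZpM β)
      ≤ 2 ^ n * A ^ mOf d k n * Real.exp (2 * k ^ 2 * mOf d k n / n) :=
        expHM_ZpM_le (by omega) hkn hβ _
    _ ≤ 2 ^ n * A ^ mOf d k n * (2 * K) := by gcongr; linarith
    _ = 2 * K * 2 ^ n * A ^ mOf d k n := by ring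
end
end

section
/- Fix an integer k ≥ 3, d > 0 and β ≥ 0, let m = ⌈dn/k⌉, and let ε > 0. Let B̄_ε be the set of all σ : [n] → {−1,1} with ||σ^{-1}(1)| − n/2| > εn, and let Z_{β,B̄_ε}(H) = Σ_{σ ∈ B̄_ε} exp(−β E_H(σ)). Then there exist δ > 0 and n0 such that for all n ≥ n0: E[Z_{β,B̄_ε}(H_k(n,m))] ≤ exp(−δ·n)·E[Z_β(H_k(n,m))]. -/
noncomputable section

open Finset Filter Real
open scoped Classical BigOperators

/-!
For a fixed colouring `σ`, the expected weight `E[exp(-β E_H(σ))]` over `H_k(n,m)` is an average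
of `exp(-β) ^ |H ∩ M_σ|`, where `M_σ` is the set of `σ`-monochromatic `k`-sets. It depends only
on `|M_σ| = C(a,k) + C(n-a,k)` (with `a = |σ⁻¹(1)|`) and decreases as `|M_σ|` grows; as this count
is smallest at `a = ⌊n/2⌋`, no colouring has larger expected weight than a balanced one. So the
unbalanced part of `E[Z_β]` is at most the number of unbalanced colourings, which is
`≤ (n+1) 2^n exp(-ε²n/2)` by an entropy bound, times the balanced weight, while `E[Z_β]` is at least
`C(n,⌊n/2⌋) ≥ 2^n/(n+1)` times it.
-/

namespace UnbalancedColorings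

section PowersetCard

variable {α : Type*} [DecidableEq α] {S A B : Finset α} {m : ℕ}

theorem card_powersetCard_filter_inter_eq (hAS : A ⊆ S) {K : Finset α} (hKA : K ⊆ A) :
    ((S.powersetCard m).filter fun H => H ∩ A = K).card
      = if K.card ≤ m then (S.card - A.card).choose (m - K.card) else 0 := by
  split_ifs with hKm
  · rw [← card_sdiff_of_subset hAS, ← card_powersetCard]
    refine card_nbij' (· \ A) (K ∪ ·) ?_ ?_ ?_ ?_
    · intro H hH
      simp only [mem_coe, mem_filter, mem_powersetCard] at hH ⊢
      obtain ⟨⟨hHS, hHm⟩, rfl⟩ := hH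
      refine ⟨sdiff_subset_sdiff hHS le_rfl, ?_⟩
      have := card_inter_add_card_sdiff H A
      omega
    · intro T hT
      simp only [mem_coe, mem_filter, mem_powersetCard, subset_sdiff] at hT ⊢
      obtain ⟨⟨hTS, hTA⟩, hTm⟩ := hT
      refine ⟨⟨union_subset (hKA.trans hAS) hTS, ?_⟩, ?_⟩
      · rw [card_union_of_disjoint (hTA.mono_right hKA).symm, hTm]; omega
      · rw [union_inter_distrib_right, inter_eq_left.mpr hKA,
          disjoint_iff_inter_eq_empty.mp hTA, union_empty]
    · intro H hH
      simp only [mem_coe, mem_filter] at hH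
      rw [← hH.2]
      exact (union_comm _ _).trans (sdiff_union_inter H A)
    · intro T hT
      simp only [mem_coe, mem_powersetCard, subset_sdiff] at hT
      simp only [union_sdiff_distrib, sdiff_eq_empty_iff_subset.mpr hKA, empty_union,
        sdiff_eq_self_of_disjoint hT.1.2]
  · refine card_eq_zero.mpr (filter_eq_empty_iff.mpr fun H hH hHA => hKm ?_)
    rw [← hHA, ← (mem_powersetCard.mp hH).2]
    exact card_le_card inter_subset_left

theorem sum_powersetCard_comp_card_inter {M : Type*} [AddCommMonoid M] (hAS : A ⊆ S)
    (f : ℕ → M) :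
    ∑ H ∈ S.powersetCard m, f (H ∩ A).card
      = ∑ j ∈ range (A.card + 1),
          (A.card.choose j * if j ≤ m then (S.card - A.card).choose (m - j) else 0) • f j := by
  rw [← sum_fiberwise_of_maps_to (t := A.powerset) (g := (· ∩ A))
    fun H _ => mem_powerset.mpr inter_subset_right]
  have hfiber : ∀ K ∈ A.powerset,
      ∑ H ∈ (S.powersetCard m).filter (fun H => H ∩ A = K), f (H ∩ A).card
        = (if K.card ≤ m then (S.card - A.card).choose (m - K.card) else 0) • f K.card := by
    intro K hK
    rw [sum_congr rfl fun H hH => by rw [(mem_filter.mp hH).2], sum_const,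
      card_powersetCard_filter_inter_eq hAS (mem_powerset.mp hK)]
  rw [sum_congr rfl hfiber,
    sum_powerset_apply_card fun j => (if j ≤ m then (S.card - A.card).choose (m - j) else 0) • f j]
  simp only [smul_smul]

theorem sum_powersetCard_comp_card_inter_congr {M : Type*} [AddCommMonoid M] (hAS : A ⊆ S)
    (hBS : B ⊆ S) (hAB : A.card = B.card) (f : ℕ → M) :
    ∑ H ∈ S.powersetCard m, f (H ∩ A).card = ∑ H ∈ S.powersetCard m, f (H ∩ B).card := by
  rw [sum_powersetCard_comp_card_inter hAS, sum_powersetCard_comp_card_inter hBS, hAB]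

theorem sum_powersetCard_pow_card_inter_le {x : ℝ} (hx₀ : 0 ≤ x) (hx₁ : x ≤ 1) (hAS : A ⊆ S)
    (hBS : B ⊆ S) (hBA : B.card ≤ A.card) :
    ∑ H ∈ S.powersetCard m, x ^ (H ∩ A).card ≤ ∑ H ∈ S.powersetCard m, x ^ (H ∩ B).card := by
  obtain ⟨A', hA'A, hA'B⟩ := exists_subset_card_eq hBA
  calc ∑ H ∈ S.powersetCard m, x ^ (H ∩ A).card
      ≤ ∑ H ∈ S.powersetCard m, x ^ (H ∩ A').card :=
        sum_le_sum fun H _ => pow_le_pow_of_le_one hx₀ hx₁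
          (card_le_card (inter_subset_inter le_rfl hA'A))
    _ = ∑ H ∈ S.powersetCard m, x ^ (H ∩ B).card :=
        sum_powersetCard_comp_card_inter_congr (hA'A.trans hAS) hBS hA'B _

end PowersetCard

section Colorings

variable {n : ℕ}

def monoEdges (k : ℕ) (σ : Fin n → Bool) : Finset (Finset (Fin n)) :=
  (kSets n k).filter (isMono σ)

theorem monoEdges_subset (k : ℕ) (σ : Fin n → Bool) : monoEdges k σ ⊆ kSets n k :=
  filter_subset _ _

theorem numPlus_le (σ : Fin n → Bool) : numPlus σ ≤ n :=
  (card_filter_le _ _).trans_eq (card_fin n)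

theorem card_monoEdges {k : ℕ} (hk : 1 ≤ k) (σ : Fin n → Bool) :
    (monoEdges k σ).card = (numPlus σ).choose k + (n - numPlus σ).choose k := by
  set plus := univ.filter fun v : Fin n => σ v = true
  have hmem : ∀ v, v ∈ plus ↔ σ v = true := by simp [plus]
  have hsplit : monoEdges k σ = plus.powersetCard k ∪ plusᶜ.powersetCard k := by
    ext e
    simp only [monoEdges, kSets, isMono, mem_filter, mem_univ, true_and, mem_union,
      mem_powersetCard, subset_iff, mem_compl, hmem]
    constructor
    · rintro ⟨he, hmono⟩
      obtain ⟨v, hv⟩ := card_pos.mp (he ▸ hk)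
      cases hσv : σ v
      · exact Or.inr ⟨fun w hw => by simp [hmono w hw v hv, hσv], he⟩
      · exact Or.inl ⟨fun w hw => by simp [hmono w hw v hv, hσv], he⟩
    · rintro (⟨hsub, he⟩ | ⟨hsub, he⟩) <;> refine ⟨he, fun v hv w hw => ?_⟩
      · rw [hsub hv, hsub hw]
      · simp only [Bool.not_eq_true] at hsub; rw [hsub hv, hsub hw]
  have hdisj : Disjoint (plus.powersetCard k) (plusᶜ.powersetCard k) := by
    refine disjoint_left.mpr fun e he he' => ?_
    rw [mem_powersetCard] at he he'
    obtain ⟨v, hv⟩ := card_pos.mp (he.2 ▸ hk)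
    exact mem_compl.mp (he'.1 hv) (he.1 hv)
  rw [hsplit, card_union_of_disjoint hdisj, card_powersetCard, card_powersetCard, card_compl,
    Fintype.card_fin]
  rfl

theorem choose_add_choose_sub_half_le {k : ℕ} (hk : 1 ≤ k) {a : ℕ} (ha : a ≤ n) :
    (n / 2).choose k + (n - n / 2).choose k ≤ a.choose k + (n - a).choose k := by
  obtain ⟨k, rfl⟩ : ∃ k', k = k' + 1 := ⟨k - 1, by omega⟩
  have step : ∀ b, n / 2 ≤ b → b.choose (k + 1) + (n - b).choose (k + 1)
      ≤ (b + 1).choose (k + 1) + (n - (b + 1)).choose (k + 1) := by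
    intro b hb
    -- Pascal: raising `b` by one gains `C(b,k)` and loses `C(n-b-1,k) ≤ C(b,k)`.
    rw [Nat.choose_succ_succ' b k]
    rcases Nat.eq_zero_or_eq_succ_pred (n - b) with hnb | hnb
    · rw [hnb, show n - (b + 1) = 0 by omega]
      omega
    · rw [hnb, show n - (b + 1) = (n - b).pred by omega, Nat.choose_succ_succ' _ k]
      have := Nat.choose_le_choose k (show (n - b).pred ≤ b by omega)
      omega
  have mono : ∀ b, n / 2 ≤ b →
      (n / 2).choose (k + 1) + (n - n / 2).choose (k + 1)
        ≤ b.choose (k + 1) + (n - b).choose (k + 1) := by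
    intro b hb
    induction b, hb using Nat.le_induction with
    | base => exact le_rfl
    | succ b hb ih => exact ih.trans (step b hb)
  rcases le_total (n / 2) a with h | h
  · exact mono a h
  · have := mono (n - a) (by omega)
    rw [Nat.sub_sub_self ha] at this
    omega

theorem exp_monoCount_eq_pow {k : ℕ} {H : Finset (Finset (Fin n))} (hH : H ⊆ kSets n k)
    (β : ℝ) (σ : Fin n → Bool) :
    Real.exp (-β * monoCount H σ) = Real.exp (-β) ^ (H ∩ monoEdges k σ).card := by
  have : H.filter (isMono σ) = H ∩ monoEdges k σ := by
    ext e
    simp only [monoEdges, mem_filter, mem_inter]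
    exact ⟨fun h => ⟨h.1, hH h.1, h.2⟩, fun h => ⟨h.1, h.2.2⟩⟩
  rw [monoCount, this, mul_comm, Real.exp_nat_mul]

end Colorings

section UniformModel

variable {n k m : ℕ}

theorem expHnm_eq_sum_powersetCard (f : Finset (Finset (Fin n)) → ℝ) :
    expHnm n k m f = ((kSets n k).card.choose m : ℝ)⁻¹ * ∑ H ∈ (kSets n k).powersetCard m, f H := by
  have : (kSets n k).powersetCard m = univ.filter fun H => H ⊆ kSets n k ∧ H.card = m := by
    ext H; simp
  rw [this, sum_filter, mul_sum, expHnm]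
  refine sum_congr rfl fun H _ => ?_
  unfold probHnm
  split_ifs <;> simp

theorem expHnm_sum {ι : Type*} (s : Finset ι) (f : ι → Finset (Finset (Fin n)) → ℝ) :
    expHnm n k m (fun H => ∑ i ∈ s, f i H) = ∑ i ∈ s, expHnm n k m (f i) := by
  simp only [expHnm, mul_sum]
  exact sum_comm

theorem expHnm_nonneg {f : Finset (Finset (Fin n)) → ℝ} (hf : ∀ H, 0 ≤ f H) :
    0 ≤ expHnm n k m f := by
  rw [expHnm_eq_sum_powersetCard]
  exact mul_nonneg (by positivity) (sum_nonneg fun H _ => hf H)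

theorem expHnm_exp_monoCount_le_of_numPlus_eq_half {β : ℝ} (hβ : 0 ≤ β) (hk : 1 ≤ k)
    (σ : Fin n → Bool) {τ : Fin n → Bool} (hτ : numPlus τ = n / 2) :
    expHnm n k m (fun H => Real.exp (-β * monoCount H σ))
      ≤ expHnm n k m (fun H => Real.exp (-β * monoCount H τ)) := by
  have hsum : ∀ ρ : Fin n → Bool,
      ∑ H ∈ (kSets n k).powersetCard m, Real.exp (-β * monoCount H ρ)
        = ∑ H ∈ (kSets n k).powersetCard m, Real.exp (-β) ^ (H ∩ monoEdges k ρ).card :=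
    fun ρ => sum_congr rfl fun H hH =>
      exp_monoCount_eq_pow (mem_powersetCard.mp hH).1 β ρ
  rw [expHnm_eq_sum_powersetCard, expHnm_eq_sum_powersetCard, hsum, hsum]
  refine mul_le_mul_of_nonneg_left ?_ (by positivity)
  refine sum_powersetCard_pow_card_inter_le (Real.exp_pos _).le
    (Real.exp_le_one_iff.mpr (by linarith)) (monoEdges_subset k σ) (monoEdges_subset k τ) ?_
  rw [card_monoEdges hk, card_monoEdges hk, hτ]
  exact choose_add_choose_sub_half_le hk (numPlus_le σ)

end UniformModel

section Counting

variable {n : ℕ}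

theorem card_filter_numPlus_eq (a : ℕ) :
    (univ.filter fun σ : Fin n → Bool => numPlus σ = a).card = n.choose a := by
  have : n.choose a = ((univ : Finset (Fin n)).powersetCard a).card := by simp
  rw [this]
  refine card_nbij' (fun σ => univ.filter fun v => σ v = true) (fun s v => decide (v ∈ s))
    ?_ ?_ ?_ ?_
  all_goals simp only [Set.MapsTo, Set.LeftInvOn, mem_coe, mem_filter, mem_univ, true_and,
    mem_powersetCard, subset_univ]
  · exact fun σ hσ => hσ
  · intro s hs
    simp only [numPlus, decide_eq_true_eq, filter_mem_eq_inter, univ_inter, hs]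
  · exact fun σ _ => funext fun v => by simp
  · exact fun s _ => by ext v; simp

theorem log_two_sub_sub_mul_log_one_sub_le {ε : ℝ} (hε : 0 < ε) (hε2 : ε ≤ 1 / 2) :
    Real.log (2 - ε) - (1 / 2 - ε) * Real.log (1 - ε) ≤ Real.log 2 - ε ^ 2 / 2 := by
  have hpos : 0 < 1 - ε := by linarith
  have h1 : Real.log (2 - ε) ≤ Real.log 2 - ε / 2 := by
    rw [show (2:ℝ) - ε = 2 * (1 - ε / 2) by ring, Real.log_mul two_ne_zero (by linarith)]
    linarith [Real.log_le_sub_one_of_pos (show 0 < 1 - ε / 2 by linarith)]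
  have h2 : -Real.log (1 - ε) ≤ ε / (1 - ε) := by
    rw [← Real.log_inv]
    have := Real.log_le_sub_one_of_pos (inv_pos.mpr hpos)
    rwa [show (1 - ε)⁻¹ - 1 = ε / (1 - ε) by field_simp; ring] at this
  have h3 : (1 / 2 - ε) * (ε / (1 - ε)) ≤ ε / 2 - ε ^ 2 / 2 := by
    rw [← mul_div_assoc, div_le_iff₀ hpos]
    nlinarith
  nlinarith [mul_le_mul_of_nonneg_left h2 (show 0 ≤ 1 / 2 - ε by linarith)]

theorem choose_le_of_le_half_sub {ε : ℝ} (hε : 0 < ε) (hε2 : ε ≤ 1 / 2) {a : ℕ} (han : a ≤ n)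
    (ha : (a : ℝ) ≤ n / 2 - ε * n) :
    (n.choose a : ℝ) ≤ 2 ^ n * Real.exp (-(ε ^ 2 / 2) * n) := by
  have hpos : 0 < 1 - ε := by linarith
  have hbin : (n.choose a : ℝ) * (1 - ε) ^ a ≤ (2 - ε) ^ n := by
    rw [show (2:ℝ) - ε = (1 - ε) + 1 by ring, add_pow]
    have := single_le_sum (f := fun i => (1 - ε) ^ i * 1 ^ (n - i) * (n.choose i : ℝ))
      (fun i _ => by positivity) (mem_range.mpr (Nat.lt_succ_of_le han))
    simpa [mul_comm] using this
  have hlog : Real.log (1 - ε) ≤ 0 := Real.log_nonpos hpos.le (by linarith)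
  have hexp : ∀ (x : ℝ) (j : ℕ), 0 < x → x ^ j = Real.exp (j * Real.log x) := fun x j hx => by
    rw [Real.exp_nat_mul, Real.exp_log hx]
  calc (n.choose a : ℝ) ≤ (2 - ε) ^ n / (1 - ε) ^ a := (le_div_iff₀ (by positivity)).mpr hbin
    _ = Real.exp (n * Real.log (2 - ε) - a * Real.log (1 - ε)) := by
        rw [Real.exp_sub, ← hexp _ _ (by linarith), ← hexp _ _ hpos]
    _ ≤ Real.exp (n * Real.log 2 + -(ε ^ 2 / 2) * n) := by
        gcongr
        nlinarith [log_two_sub_sub_mul_log_one_sub_le hε hε2,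
          mul_nonpos_of_nonneg_of_nonpos (show 0 ≤ n / 2 - ε * n - a by linarith) hlog]
    _ = 2 ^ n * Real.exp (-(ε ^ 2 / 2) * n) := by
        rw [Real.exp_add, ← hexp 2 n two_pos]

theorem choose_le_of_far_from_half {ε : ℝ} (hε : 0 < ε) (hε2 : ε ≤ 1 / 2) {a : ℕ} (han : a ≤ n)
    (ha : ε * n < |(a : ℝ) - n / 2|) :
    (n.choose a : ℝ) ≤ 2 ^ n * Real.exp (-(ε ^ 2 / 2) * n) := by
  rcases le_or_gt (a : ℝ) (n / 2) with h | h
  · rw [abs_of_nonpos (by linarith)] at ha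
    exact choose_le_of_le_half_sub hε hε2 han (by linarith)
  · rw [abs_of_pos (by linarith)] at ha
    rw [← Nat.choose_symm han]
    exact choose_le_of_le_half_sub hε hε2 (Nat.sub_le n a) (by push_cast [han]; linarith)

theorem card_far_from_half_le {ε : ℝ} (hε : 0 < ε) (hε2 : ε ≤ 1 / 2) :
    ((univ.filter fun σ : Fin n → Bool => ε * n < |(numPlus σ : ℝ) - n / 2|).card : ℝ)
      ≤ (n + 1) * (2 ^ n * Real.exp (-(ε ^ 2 / 2) * n)) := by
  set far := univ.filter fun σ : Fin n → Bool => ε * n < |(numPlus σ : ℝ) - n / 2|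
  have hfiber : ∀ a ∈ range (n + 1),
      ((far.filter fun σ => numPlus σ = a).card : ℝ) ≤ 2 ^ n * Real.exp (-(ε ^ 2 / 2) * n) := by
    intro a ha
    by_cases hfar : ε * n < |(a : ℝ) - n / 2|
    · calc ((far.filter fun σ => numPlus σ = a).card : ℝ)
          ≤ (univ.filter fun σ : Fin n → Bool => numPlus σ = a).card := by
            exact_mod_cast card_le_card (filter_subset_filter _ (subset_univ far))
        _ = n.choose a := by rw [card_filter_numPlus_eq (n := n) a]
        _ ≤ _ := choose_le_of_far_from_half hε hε2 (Nat.lt_succ_iff.mp (mem_range.mp ha)) hfar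
    · rw [filter_filter, filter_false_of_mem fun σ _ ⟨hσ, hσa⟩ => hfar (hσa ▸ hσ)]
      simp only [card_empty, Nat.cast_zero]
      positivity
  calc (far.card : ℝ) = ∑ a ∈ range (n + 1), ((far.filter fun σ => numPlus σ = a).card : ℝ) := by
        rw [card_eq_sum_card_fiberwise (f := numPlus)
          fun σ _ => mem_range.mpr (Nat.lt_succ_of_le (numPlus_le σ))]
        push_cast; rfl
    _ ≤ ∑ _a ∈ range (n + 1), 2 ^ n * Real.exp (-(ε ^ 2 / 2) * n) := sum_le_sum hfiber
    _ = (n + 1) * (2 ^ n * Real.exp (-(ε ^ 2 / 2) * n)) := by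
        rw [sum_const, card_range, nsmul_eq_mul]; push_cast; ring

theorem two_pow_le_succ_mul_choose_half : (2 : ℝ) ^ n ≤ (n + 1) * n.choose (n / 2) := by
  have : 2 ^ n ≤ (n + 1) * n.choose (n / 2) := by
    rw [← Nat.sum_range_choose n]
    calc ∑ i ∈ range (n + 1), n.choose i ≤ ∑ _i ∈ range (n + 1), n.choose (n / 2) :=
          sum_le_sum fun i _ => Nat.choose_le_middle i n
      _ = (n + 1) * n.choose (n / 2) := by rw [sum_const, card_range, smul_eq_mul]
  exact_mod_cast this

theorem sum_far_from_half_le {ε : ℝ} (hε : 0 < ε) (hε2 : ε ≤ 1 / 2)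
    (w : (Fin n → Bool) → ℝ) (hw : ∀ σ, 0 ≤ w σ)
    (hmax : ∀ σ τ, numPlus τ = n / 2 → w σ ≤ w τ) :
    ∑ σ ∈ univ.filter (fun σ : Fin n → Bool => ε * n < |(numPlus σ : ℝ) - n / 2|), w σ
      ≤ ((n + 1) ^ 2 * Real.exp (-(ε ^ 2 / 2) * n)) * ∑ σ, w σ := by
  set half := univ.filter fun σ : Fin n → Bool => numPlus σ = n / 2
  obtain ⟨τ, hτ⟩ : half.Nonempty := by
    rw [← card_pos, card_filter_numPlus_eq]
    exact Nat.choose_pos (Nat.div_le_self n 2)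
  have hτhalf : numPlus τ = n / 2 := (mem_filter.mp hτ).2
  have hhalf : (n.choose (n / 2) : ℝ) * w τ ≤ ∑ σ, w σ := by
    have hconst : ∑ σ ∈ half, w σ = n.choose (n / 2) * w τ := by
      rw [sum_congr rfl fun σ hσ => le_antisymm (hmax σ τ hτhalf) (hmax τ σ (mem_filter.mp hσ).2),
        sum_const, card_filter_numPlus_eq, nsmul_eq_mul]
    exact hconst ▸ sum_le_sum_of_subset_of_nonneg (subset_univ half) fun σ _ _ => hw σ
  calc ∑ σ ∈ univ.filter (fun σ : Fin n → Bool => ε * n < |(numPlus σ : ℝ) - n / 2|), w σ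
      ≤ (univ.filter fun σ : Fin n → Bool => ε * n < |(numPlus σ : ℝ) - n / 2|).card * w τ := by
        rw [← nsmul_eq_mul]
        exact sum_le_card_nsmul _ _ _ fun σ _ => hmax σ τ hτhalf
    _ ≤ (n + 1) * (2 ^ n * Real.exp (-(ε ^ 2 / 2) * n)) * w τ := by
        gcongr
        · exact hw τ
        · exact card_far_from_half_le hε hε2
    _ ≤ (n + 1) * ((n + 1) * n.choose (n / 2) * Real.exp (-(ε ^ 2 / 2) * n)) * w τ := by
        gcongr
        · exact hw τ
        · exact two_pow_le_succ_mul_choose_half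
    _ = ((n + 1) ^ 2 * Real.exp (-(ε ^ 2 / 2) * n)) * (n.choose (n / 2) * w τ) := by ring
    _ ≤ ((n + 1) ^ 2 * Real.exp (-(ε ^ 2 / 2) * n)) * ∑ σ, w σ := by gcongr

theorem succ_sq_mul_exp_le {ε : ℝ} (hε : ε ≠ 0) (hn : 128 / ε ^ 4 ≤ n) :
    ((n : ℝ) + 1) ^ 2 * Real.exp (-(ε ^ 2 / 2) * n) ≤ Real.exp (-(ε ^ 2 / 4) * n) := by
  have hε4 : 0 < ε ^ 4 := by positivity
  have hlin : (n : ℝ) + 1 ≤ Real.exp (ε ^ 2 / 8 * n) := by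
    have hq := Real.quadratic_le_exp_of_nonneg (x := ε ^ 2 / 8 * n) (by positivity)
    have : (n : ℝ) ≤ ε ^ 4 * n / 128 * n := by
      rw [div_le_iff₀' hε4] at hn
      nlinarith [sq_nonneg (n : ℝ)]
    nlinarith [sq_nonneg ε, Nat.cast_nonneg (α := ℝ) n]
  calc ((n : ℝ) + 1) ^ 2 * Real.exp (-(ε ^ 2 / 2) * n)
      ≤ Real.exp (ε ^ 2 / 8 * n) ^ 2 * Real.exp (-(ε ^ 2 / 2) * n) := by gcongr
    _ = Real.exp (-(ε ^ 2 / 4) * n) := by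
        rw [← Real.exp_nat_mul, ← Real.exp_add]; congr 1; push_cast; ring

end Counting

end UnbalancedColorings

open UnbalancedColorings

theorem statement_7_general (k : ℕ) (hk : 3 ≤ k) (d β : ℝ) (hβ : 0 ≤ β)
    (ε : ℝ) (hε : 0 < ε) :
    ∃ δ : ℝ, 0 < δ ∧ ∃ n0 : ℕ, ∀ n : ℕ, n0 ≤ n →
      expHnm n k (mOf d k n) (fun H =>
          ∑ σ : Fin n → Bool,
            if ε * n < |(numPlus σ : ℝ) - n / 2| then
              Real.exp (-β * (monoCount H σ : ℝ))
            else 0)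
        ≤ Real.exp (-δ * n) * expHnm n k (mOf d k n) (Zp β) := by
  set ε' := min ε (1 / 2)
  have hε' : 0 < ε' := lt_min hε one_half_pos
  refine ⟨ε' ^ 2 / 4, by positivity, ⌈128 / ε' ^ 4⌉₊, fun n hn => ?_⟩
  set w : (Fin n → Bool) → ℝ := fun σ => expHnm n k (mOf d k n) fun H =>
    Real.exp (-β * monoCount H σ)
  have hw : ∀ σ, 0 ≤ w σ := fun σ => expHnm_nonneg fun H => (Real.exp_pos _).le
  have hfar : ∀ σ : Fin n → Bool, σ ∈ univ → ε * n < |(numPlus σ : ℝ) - n / 2| →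
      ε' * n < |(numPlus σ : ℝ) - n / 2| := fun σ _ hσ =>
    lt_of_le_of_lt (mul_le_mul_of_nonneg_right (min_le_left _ _) n.cast_nonneg) hσ
  have hZ : expHnm n k (mOf d k n) (Zp β) = ∑ σ, w σ :=
    expHnm_sum univ fun σ H => Real.exp (-β * monoCount H σ)
  simp only [← sum_filter, expHnm_sum, hZ]
  calc ∑ σ ∈ univ.filter (fun σ : Fin n → Bool => ε * n < |(numPlus σ : ℝ) - n / 2|), w σ
      ≤ ∑ σ ∈ univ.filter (fun σ : Fin n → Bool => ε' * n < |(numPlus σ : ℝ) - n / 2|), w σ :=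
        sum_le_sum_of_subset_of_nonneg (monotone_filter_right _ hfar) fun σ _ _ => hw σ
    _ ≤ ((n + 1) ^ 2 * Real.exp (-(ε' ^ 2 / 2) * n)) * ∑ σ, w σ :=
        sum_far_from_half_le hε' (min_le_right _ _) w hw fun σ τ hτ =>
          expHnm_exp_monoCount_le_of_numPlus_eq_half hβ (by omega) σ hτ
    _ ≤ Real.exp (-(ε' ^ 2 / 4) * n) * ∑ σ, w σ := by
        gcongr
        · exact sum_nonneg fun σ _ => hw σ
        · exact succ_sq_mul_exp_le hε'.ne' (Nat.ceil_le.mp hn)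

theorem statement_7 (k : ℕ) (hk : 3 ≤ k) (d β : ℝ) (hd : 0 < d) (hβ : 0 ≤ β)
    (ε : ℝ) (hε : 0 < ε) :
    ∃ δ : ℝ, 0 < δ ∧ ∃ n0 : ℕ, ∀ n : ℕ, n0 ≤ n →
      expHnm n k (mOf d k n) (fun H =>
          ∑ σ : Fin n → Bool,
            if ε * n < |(numPlus σ : ℝ) - n / 2| then
              Real.exp (-β * (monoCount H σ : ℝ))
            else 0)
        ≤ Real.exp (-δ * n) * expHnm n k (mOf d k n) (Zp β) :=
  statement_7_general k hk d β hβ ε hε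
end
end

section
/- For every C > 0 there exists an integer k0 such that for all k ≥ k0, all d > 0 with |d/k − 2^{k−1}·ln 2| ≤ C, all β ≥ 0, and every α with 0 < |α| ≤ 1 − 2^{−3k/4}: Λ_β(α) < Λ_β(0). -/
noncomputable section

open Finset Filter Real
open scoped Classical BigOperators

/-!
Write `q = 2^{1-k}`, `λ = 1 - e^{-β}` and `S(α) = ((1+α)/2)^k + ((1-α)/2)^k`, so that
`S(0) = q` and the energy term of `Λ_β(α)` is `(d/k)·ln(1 - qλ(2 - λS(α)))`. At `α = 0` its
argument is the square `(1 - qλ)²`, so `ln a - ln b ≤ a/b - 1` together with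
`d/k ≤ 2^{k-1} ln 2 + C = (ln 2 + Cq)/q` gives, uniformly in `β`,
`Λ_β(α) - Λ_β(0) ≤ H((1+α)/2) - ln 2 + (ln 2 + η)(S(α) - q)` with `η = (2C+3)q ≤ 2^{-3k/4}/2`.
The entropy loss beats this energy gain in four regimes of `|α|`, with `z = (1-|α|)/2`:
* `k|α| ≤ 1`: `S(α) - q ≤ 2k²α²/2^k` is negligible against Pinsker's `H ≤ ln 2 - α²/2`;
* `1/k < |α| ≤ 49/50`: `S(α) ≤ e^{-kz} + 2^{-k} = O(k⁻³)`, again below `α²/2`;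
* `49/50 < |α|` and `kz > 1/2`: `S(α) ≤ e^{-1/2} + z`, and `(ln 2)·0.63 < 0.48 < α²/2`;
* `kz ≤ 1/2`: `(1-z)^k ≤ 1 - kz + (kz)²` turns the gain into about `-(ln 2)·kz`, which beats
  `H(z) ≤ z ln(1/z) + z` since `z ≥ 2^{-3k/4}/2` bounds `ln(1/z)` by roughly `(3/4)k ln 2`.
-/

lemma entH_one_sub (x : ℝ) : entH (1 - x) = entH x := by
  simp only [entH]
  ring_nf

lemma entH_half : entH (1 / 2) = log 2 := by
  rw [entH, show (1 : ℝ) - 1 / 2 = 1 / 2 by norm_num, one_div, log_inv]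
  ring

lemma two_mul_le_log_one_add_sub_log_one_sub {t : ℝ} (h0 : 0 ≤ t) (h1 : t < 1) :
    2 * t ≤ log (1 + t) - log (1 - t) := by
  have hs := hasSum_log_sub_log_of_abs_lt_one (abs_lt.2 ⟨by linarith, h1⟩)
  simpa using le_hasSum hs 0 fun j _ => by positivity

lemma sq_le_mul_log_one_add_add_mul_log_one_sub {t : ℝ} (h0 : 0 ≤ t) (h1 : t < 1) :
    t ^ 2 ≤ (1 + t) * log (1 + t) + (1 - t) * log (1 - t) := by
  set g : ℝ → ℝ := fun s => (1 + s) * log (1 + s) + (1 - s) * log (1 - s) - s ^ 2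
  have hg : ∀ s ∈ Set.Ico (0 : ℝ) 1, HasDerivAt g (log (1 + s) - log (1 - s) - 2 * s) s := by
    intro s ⟨hs0, hs1⟩
    have hp : HasDerivAt (fun s => 1 + s) 1 s := (hasDerivAt_id' s).const_add 1
    have hm : HasDerivAt (fun s => 1 - s) (-1) s := (hasDerivAt_id' s).const_sub 1
    have hp0 : 1 + s ≠ 0 := by linarith
    have hm0 : 1 - s ≠ 0 := by linarith
    refine (((hp.mul (hp.log hp0)).add (hm.mul (hm.log hm0))).sub
      (hasDerivAt_pow 2 s)).congr_deriv ?_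
    field_simp
    ring
  have hmono : MonotoneOn g (Set.Ico 0 1) := by
    refine monotoneOn_of_hasDerivWithinAt_nonneg (convex_Ico 0 1)
      (fun s hs => (hg s hs).continuousAt.continuousWithinAt)
      (fun s hs => (hg s (interior_subset hs)).hasDerivWithinAt) fun s hs => ?_
    rw [interior_Ico] at hs
    linarith [two_mul_le_log_one_add_sub_log_one_sub hs.1.le hs.2]
  have := hmono ⟨le_rfl, one_pos⟩ ⟨h0, h1⟩ h0
  simp only [g] at this
  norm_num at this
  linarith

lemma entH_le_log_two_sub_sq {a : ℝ} (h0 : 0 ≤ a) (h1 : a < 1) :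
    entH ((1 + a) / 2) ≤ log 2 - a ^ 2 / 2 := by
  have h := sq_le_mul_log_one_add_add_mul_log_one_sub h0 h1
  have eplus : log ((1 + a) / 2) = log (1 + a) - log 2 := log_div (by linarith) two_ne_zero
  have eminus : log (1 - (1 + a) / 2) = log (1 - a) - log 2 := by
    rw [show 1 - (1 + a) / 2 = (1 - a) / 2 by ring]
    exact log_div (by linarith) two_ne_zero
  simp only [entH, eplus, eminus]
  linarith

lemma entH_le_mul_log_inv_add {z : ℝ} (h1 : z < 1) :
    entH z ≤ z * log z⁻¹ + z := by
  have h := one_sub_inv_le_log_of_pos (sub_pos.2 h1)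
  have : -(1 - z) * log (1 - z) ≤ z := by
    have := mul_le_mul_of_nonneg_left h (sub_pos.2 h1).le
    rw [mul_sub, mul_inv_cancel₀ (sub_pos.2 h1).ne'] at this
    linarith
  simp only [entH, log_inv]
  linarith

lemma four_mul_sq_le_two_pow {n : ℕ} (hn : 8 ≤ n) : 4 * n ^ 2 ≤ 2 ^ n := by
  induction n, hn using Nat.le_induction with
  | base => norm_num
  | succ n hn ih => rw [pow_succ 2 n]; nlinarith

lemma one_add_pow_le_exp_mul {x : ℝ} (hx : -1 ≤ x) (n : ℕ) : (1 + x) ^ n ≤ exp (n * x) := by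
  rw [exp_nat_mul]
  exact pow_le_pow_left₀ (by linarith) (by linarith [add_one_le_exp x]) n

lemma exp_le_one_add_add_sq {t : ℝ} (ht : |t| ≤ 1) : exp t ≤ 1 + t + t ^ 2 := by
  linarith [(abs_le.1 (abs_exp_sub_one_sub_id_le ht)).2]

def powSum (k : ℕ) (α : ℝ) : ℝ := ((1 + α) / 2) ^ k + ((1 - α) / 2) ^ k

lemma powSum_neg (k : ℕ) (α : ℝ) : powSum k (-α) = powSum k α := by
  rw [powSum, powSum, sub_neg_eq_add, ← sub_eq_add_neg, add_comm]

lemma powSum_abs (k : ℕ) (α : ℝ) : powSum k |α| = powSum k α := by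
  rcases abs_choice α with h | h <;> simp [h, powSum_neg]

lemma entH_one_add_abs_div_two (α : ℝ) : entH ((1 + |α|) / 2) = entH ((1 + α) / 2) := by
  rcases abs_choice α with h | h
  · rw [h]
  · rw [h, ← entH_one_sub]
    ring_nf

lemma powSum_zero (k : ℕ) : powSum k 0 = 2 ^ ((1 : ℤ) - k) := by
  rw [zpow_sub₀ two_ne_zero, zpow_one, zpow_natCast]
  simp only [powSum, add_zero, sub_zero, div_pow, one_pow]
  ring

lemma powSum_zero_nonneg (k : ℕ) : 0 ≤ powSum k 0 := by
  rw [powSum_zero]; positivity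

lemma powSum_zero_le (k : ℕ) {α : ℝ} (hα : |α| ≤ 1) : powSum k 0 ≤ powSum k α := by
  obtain ⟨hα₁, hα₂⟩ := abs_le.1 hα
  rcases k.eq_zero_or_pos with rfl | hk
  · simp [powSum]
  have h := add_pow_le (a := (1 + α) / 2) (b := (1 - α) / 2) (by linarith) (by linarith) k
  rw [show (1 + α) / 2 + (1 - α) / 2 = 1 by ring, one_pow] at h
  have h2 : (2 : ℝ) ^ k = 2 * 2 ^ (k - 1) := by rw [← pow_succ']; congr 1; omega
  rw [powSum_zero, zpow_sub₀ two_ne_zero, zpow_one, zpow_natCast, h2, powSum,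
    div_le_iff₀ (by positivity)]
  linarith

lemma powSum_le_one {k : ℕ} (hk : k ≠ 0) {α : ℝ} (hα : |α| ≤ 1) : powSum k α ≤ 1 := by
  obtain ⟨hα₁, hα₂⟩ := abs_le.1 hα
  have hplus := pow_le_of_le_one (a := (1 + α) / 2) (by linarith) (by linarith) hk
  have hminus := pow_le_of_le_one (a := (1 - α) / 2) (by linarith) (by linarith) hk
  rw [powSum]
  linarith

lemma Lam_eq (k : ℕ) (d β α : ℝ) :
    Lam k d β α = entH ((1 + α) / 2) + d / k * log (1 - 2 ^ ((1 : ℤ) - k) * (1 - exp (-β)) *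
      (2 - (1 - exp (-β)) * powSum k α)) := by
  simp only [Lam, powSum, div_pow]
  ring_nf

lemma log_one_sub_mul_sub_log_le {q l s : ℝ} (hq0 : 0 ≤ q) (hq1 : q < 1) (hl0 : 0 ≤ l)
    (hl1 : l ≤ 1) (hs : q ≤ s) :
    log (1 - q * l * (2 - l * s)) - log (1 - q * l * (2 - l * q)) ≤ q / (1 - q) ^ 2 * (s - q) := by
  have hql : q * l ≤ q := mul_le_of_le_one_right hq0 hl1
  have hb : 1 - q * l * (2 - l * q) = (1 - q * l) ^ 2 := by ring
  have hb0 : 0 < (1 - q * l) ^ 2 := pow_pos (by linarith) 2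
  have hab : 1 - q * l * (2 - l * s) - (1 - q * l) ^ 2 = q * l ^ 2 * (s - q) := by ring
  have ha0 : 0 < 1 - q * l * (2 - l * s) := by
    nlinarith [mul_nonneg hq0 (mul_nonneg (sq_nonneg l) (sub_nonneg.2 hs))]
  rw [hb, ← log_div ha0.ne' hb0.ne']
  refine (log_le_sub_one_of_pos (div_pos ha0 hb0)).trans ?_
  rw [div_sub_one hb0.ne', hab]
  have hl : l ^ 2 * (1 - q) ^ 2 ≤ (1 - q * l) ^ 2 := by
    rw [← mul_pow]
    exact pow_le_pow_left₀ (mul_nonneg hl0 (by linarith)) (by nlinarith) 2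
  rw [div_mul_eq_mul_div, div_le_div_iff₀ hb0 (by nlinarith)]
  nlinarith [mul_le_mul_of_nonneg_left hl (mul_nonneg hq0 (sub_nonneg.2 hs))]

lemma Lam_sub_Lam_zero_le {k : ℕ} (hk : 2 ≤ k) {d β α : ℝ} (hd : 0 ≤ d) (hβ : 0 ≤ β)
    (hα : |α| ≤ 1) :
    Lam k d β α - Lam k d β 0 ≤ entH ((1 + α) / 2) - log 2 +
      d / k * (2 ^ ((1 : ℤ) - k) / (1 - 2 ^ ((1 : ℤ) - k)) ^ 2) * (powSum k α - powSum k 0) := by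
  have hq1 : (2 : ℝ) ^ ((1 : ℤ) - k) < 1 := zpow_lt_one_of_neg₀ one_lt_two (by omega)
  have h := log_one_sub_mul_sub_log_le (zpow_pos two_pos _).le hq1
    (sub_nonneg.2 (exp_le_one_iff.2 (neg_nonpos.2 hβ))) (sub_le_self _ (exp_pos _).le)
    (powSum_zero k ▸ powSum_zero_le k hα)
  have := mul_le_mul_of_nonneg_left h (by positivity : 0 ≤ d / k)
  rw [Lam_eq, Lam_eq, add_zero, entH_half, powSum_zero]
  linarith

lemma powSum_sub_powSum_zero_le {k : ℕ} (hk : k ≠ 0) {α : ℝ} (hkα : |k * α| ≤ 1) :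
    powSum k α - powSum k 0 ≤ 2 * (k * α) ^ 2 / 2 ^ k := by
  have hα : |α| ≤ 1 := by
    have : (1 : ℝ) ≤ k := Nat.one_le_cast.2 (Nat.one_le_iff_ne_zero.2 hk)
    rw [abs_mul, Nat.abs_cast] at hkα
    nlinarith [abs_nonneg α]
  obtain ⟨hα₁, hα₂⟩ := abs_le.1 hα
  have hplus := (one_add_pow_le_exp_mul hα₁ k).trans (exp_le_one_add_add_sq hkα)
  have hminus := (one_add_pow_le_exp_mul (x := -α) (by linarith) k).trans
    (exp_le_one_add_add_sq (t := k * -α) (by rwa [mul_neg, abs_neg]))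
  rw [powSum_zero, zpow_sub₀ two_ne_zero, zpow_one, zpow_natCast, powSum, div_pow, div_pow,
    ← sub_eq_add_neg] at *
  rw [← add_div, div_sub_div_same, div_le_div_iff_of_pos_right (by positivity)]
  linarith

lemma div_mul_le_log_two_add {k : ℕ} (hk : 5 ≤ k) {d C : ℝ} (hC : 0 ≤ C)
    (hdC : |d / k - 2 ^ (k - 1) * log 2| ≤ C) :
    d / k * (2 ^ ((1 : ℤ) - k) / (1 - 2 ^ ((1 : ℤ) - k)) ^ 2) ≤
      log 2 + (2 * C + 3) * 2 ^ ((1 : ℤ) - k) := by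
  set q : ℝ := 2 ^ ((1 : ℤ) - k) with hqdef
  have hq0 : 0 < q := zpow_pos two_pos _
  have hq : q * 2 ^ (k - 1) = 1 := by
    rw [hqdef, ← zpow_natCast, ← zpow_add₀ two_ne_zero, Nat.cast_sub (by omega)]
    norm_num
  have hq16 : q ≤ 1 / 16 := by
    rw [hqdef, show (1 / 16 : ℝ) = 2 ^ (-4 : ℤ) by norm_num]
    exact zpow_le_zpow_right₀ one_le_two (by omega)
  have hdq : d / k * q ≤ log 2 + C * q := by
    have := mul_le_mul_of_nonneg_right
      (show d / k ≤ 2 ^ (k - 1) * log 2 + C by linarith [(abs_le.1 hdC).2]) hq0.le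
    linear_combination this + log 2 * hq
  have hL : 0 ≤ C + 3 - 2 * log 2 - (4 * C + 6) * q := by
    nlinarith [log_two_lt_d9, mul_le_mul_of_nonneg_left hq16 (by linarith : 0 ≤ 4 * C + 6)]
  rw [← mul_div_assoc, div_le_iff₀ (by nlinarith)]
  nlinarith [mul_nonneg hq0.le hL, mul_nonneg (by positivity : 0 ≤ log 2 + (2 * C + 3) * q)
    (sq_nonneg q)]

lemma mul_two_zpow_le_two_rpow_div_two {k : ℕ} {c : ℝ} (hc : 24 * c ≤ k) :
    c * 2 ^ ((1 : ℤ) - k) ≤ (2 : ℝ) ^ (-(3 * (k : ℝ) / 4)) / 2 := by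
  have h2k : (2 : ℝ) ^ ((1 : ℤ) - k) = 2 * 2 ^ (-(k : ℝ)) := by
    rw [← rpow_intCast, Int.cast_sub, Int.cast_one, Int.cast_natCast, sub_eq_add_neg,
      rpow_add two_pos, rpow_one]
  have h34 : (2 : ℝ) ^ (-(3 * (k : ℝ) / 4)) = 2 ^ ((k : ℝ) / 4) * 2 ^ (-(k : ℝ)) := by
    rw [← rpow_add two_pos]; ring_nf
  have hexp : 1 + (k : ℝ) / 4 * log 2 ≤ 2 ^ ((k : ℝ) / 4) := by
    rw [rpow_def_of_pos two_pos, mul_comm]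
    exact add_one_le_exp _ |>.trans' (by linarith)
  have h4c : 4 * c ≤ 2 ^ ((k : ℝ) / 4) := by
    have hk0 : (0 : ℝ) ≤ k := Nat.cast_nonneg k
    rcases le_or_gt c 0 with hc0 | hc0
    · nlinarith [log_nonneg one_le_two]
    · nlinarith [log_two_gt_d9, mul_le_mul_of_nonneg_right hc (log_nonneg one_le_two)]
  rw [h2k, h34]
  nlinarith [mul_le_mul_of_nonneg_right h4c (by positivity : (0 : ℝ) ≤ 2 ^ (-(k : ℝ)))]

lemma entH_add_mul_powSum_sub_lt_of_mul_le_one {k : ℕ} (hk : 8 ≤ k) {η a : ℝ}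
    (hη0 : 0 ≤ η) (hη : η < 1 - log 2) (ha0 : 0 < a) (hka : k * a ≤ 1) :
    entH ((1 + a) / 2) + (log 2 + η) * (powSum k a - powSum k 0) < log 2 := by
  have hk8 : (8 : ℝ) ≤ k := by exact_mod_cast hk
  have ha1 : a < 1 := by nlinarith
  have hK : (4 : ℝ) * k ^ 2 ≤ 2 ^ k := by exact_mod_cast four_mul_sq_le_two_pow hk
  have hS : powSum k a - powSum k 0 ≤ a ^ 2 / 2 := by
    refine (powSum_sub_powSum_zero_le (by omega) (abs_le.2 ⟨by nlinarith, hka⟩)).trans ?_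
    rw [div_le_div_iff₀ (by positivity) two_pos]
    nlinarith [mul_le_mul_of_nonneg_left hK (sq_nonneg a)]
  have hH := entH_le_log_two_sub_sq ha0.le ha1
  have hgain : 0 < (1 - log 2 - η) * (a ^ 2 / 2) := by
    have := mul_pos ha0 ha0
    have : 0 < 1 - log 2 - η := by linarith
    positivity
  nlinarith [mul_le_mul_of_nonneg_left hS (by positivity : 0 ≤ log 2 + η)]

lemma entH_add_mul_powSum_sub_lt_of_le {k : ℕ} (hk : 10 ^ 9 ≤ k) {η a : ℝ} (hη0 : 0 ≤ η)
    (hη : η ≤ 1 / 4) (hka : 1 < k * a) (ha : a ≤ 49 / 50) :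
    entH ((1 + a) / 2) + (log 2 + η) * (powSum k a - powSum k 0) < log 2 := by
  have hK : (10 : ℝ) ^ 9 ≤ k := by exact_mod_cast hk
  have ha0 : 0 < a := by nlinarith
  have hH := entH_le_log_two_sub_sq ha0.le (by linarith)
  have hexp : exp (-(k / 100)) ≤ 1 / (100 * k ^ 2) := by
    have h3 := pow_div_factorial_le_exp (x := k / 100) (by positivity) 3
    rw [exp_neg, one_div, inv_le_inv₀ (exp_pos _) (by positivity)]
    norm_num [Nat.factorial] at h3
    nlinarith
  have hplus : ((1 + a) / 2) ^ k ≤ 1 / (100 * k ^ 2) := by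
    have := one_add_pow_le_exp_mul (x := -((1 - a) / 2)) (by linarith) k
    refine le_trans ?_ (hexp.trans' (exp_le_exp.2 (by nlinarith : k * -((1 - a) / 2) ≤ -(k / 100))))
    rwa [show 1 + -((1 - a) / 2) = (1 + a) / 2 by ring] at this
  have hminus : ((1 - a) / 2) ^ k ≤ 1 / (4 * k ^ 2) := by
    have hK2 : (4 : ℝ) * k ^ 2 ≤ 2 ^ k := by exact_mod_cast four_mul_sq_le_two_pow (by omega)
    calc ((1 - a) / 2) ^ k ≤ (1 / 2) ^ k := pow_le_pow_left₀ (by linarith) (by linarith) k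
      _ = 1 / 2 ^ k := by rw [div_pow, one_pow]
      _ ≤ 1 / (4 * k ^ 2) := one_div_le_one_div_of_le (by positivity) hK2
  have hS : (powSum k a - powSum k 0) * k ^ 2 ≤ 26 / 100 := by
    have := powSum_zero_nonneg k
    rw [powSum]
    have e1 : 1 / (100 * (k : ℝ) ^ 2) * k ^ 2 = 1 / 100 := by field_simp
    have e2 : 1 / (4 * (k : ℝ) ^ 2) * k ^ 2 = 1 / 4 := by field_simp
    nlinarith [mul_le_mul_of_nonneg_right hplus (sq_nonneg (k : ℝ)),
      mul_le_mul_of_nonneg_right hminus (sq_nonneg (k : ℝ)),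
      mul_nonneg this (sq_nonneg (k : ℝ))]
  have key : (log 2 + η) * (powSum k a - powSum k 0) * k ^ 2 < a ^ 2 / 2 * k ^ 2 := by
    have := mul_le_mul_of_nonneg_left hS (by positivity : 0 ≤ log 2 + η)
    nlinarith [log_two_lt_d9]
  linarith [lt_of_mul_lt_mul_right key (by positivity)]

lemma entH_add_mul_powSum_sub_lt_of_lt_mul_one_sub {k : ℕ} {η a : ℝ} (hη0 : 0 ≤ η)
    (hη : η ≤ 1 / 1000) (ha : 49 / 50 ≤ a) (hka : 1 < k * (1 - a)) :
    entH ((1 + a) / 2) + (log 2 + η) * (powSum k a - powSum k 0) < log 2 := by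
  have ha1 : a < 1 := by
    by_contra h
    nlinarith [(Nat.cast_nonneg k : (0 : ℝ) ≤ k)]
  have hk : k ≠ 0 := by rintro rfl; norm_num at hka
  have hH := entH_le_log_two_sub_sq (by linarith) ha1
  have hexp : exp (-(1 / 2)) ≤ 8 / 13 := by
    have := quadratic_le_exp_of_nonneg (x := 1 / 2) (by norm_num)
    rw [exp_neg, inv_le_comm₀ (exp_pos _) (by norm_num)]
    linarith
  have hplus : ((1 + a) / 2) ^ k ≤ 8 / 13 := by
    have := one_add_pow_le_exp_mul (x := -((1 - a) / 2)) (by linarith) k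
    refine le_trans ?_ (hexp.trans' (exp_le_exp.2 (by nlinarith : k * -((1 - a) / 2) ≤ -(1 / 2))))
    rwa [show 1 + -((1 - a) / 2) = (1 + a) / 2 by ring] at this
  have hminus : ((1 - a) / 2) ^ k ≤ (1 - a) / 2 := pow_le_of_le_one (by linarith) (by linarith) hk
  have hS : powSum k a - powSum k 0 ≤ 8 / 13 + 1 / 100 := by
    have := powSum_zero_nonneg k
    rw [powSum]
    linarith
  have := mul_le_mul_of_nonneg_left hS (by positivity : 0 ≤ log 2 + η)
  nlinarith [log_two_lt_d9]

lemma log_inv_add_lt_log_two_mul {k : ℕ} (hk : 10 ^ 9 ≤ k) {z : ℝ}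
    (hz : (2 : ℝ) ^ (-(3 * (k : ℝ) / 4)) / 2 ≤ z) (hkz : 2 * k * z ≤ 1) :
    log z⁻¹ + 3 + log 2 * (k ^ 2 * z) < log 2 * k := by
  have hK : (10 : ℝ) ^ 9 ≤ k := by exact_mod_cast hk
  have hz0 : 0 < z := lt_of_lt_of_le (by positivity) hz
  have hKlog : (10 : ℝ) ^ 9 * 0.69 ≤ k * log 2 := by nlinarith [log_two_gt_d9]
  rcases le_or_gt (k ^ 2 * z) 1 with hsmall | hlarge
  · have hlog : log z⁻¹ ≤ (3 * k / 4 + 1) * log 2 := by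
      calc log z⁻¹ ≤ log ((2 ^ (-(3 * (k : ℝ) / 4)) / 2)⁻¹) :=
            log_le_log (by positivity) (inv_anti₀ (by positivity) hz)
        _ = (3 * k / 4 + 1) * log 2 := by
          rw [log_inv, log_div (by positivity) two_ne_zero, log_rpow two_pos]
          ring
    nlinarith [mul_le_mul_of_nonneg_left hsmall (log_nonneg one_le_two), log_two_lt_d9]
  · have hsqrt : √(k : ℝ) * √(k : ℝ) = k := Real.mul_self_sqrt (by positivity)
    have hsqrt100 : 100 ≤ √(k : ℝ) := Real.le_sqrt_of_sq_le (by linarith)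
    have hlog : log z⁻¹ ≤ 4 * √(k : ℝ) := by
      have hinv : z⁻¹ ≤ k ^ 2 := by
        rw [inv_le_iff_one_le_mul₀ hz0]; linarith
      have hlogk : log k ≤ 2 * √(k : ℝ) := by
        have := log_le_sub_one_of_pos (x := √(k : ℝ)) (by positivity)
        rw [log_sqrt (by positivity)] at this
        linarith
      calc log z⁻¹ ≤ log (k ^ 2) := log_le_log (by positivity) hinv
        _ = 2 * log k := by rw [log_pow]; norm_num
        _ ≤ 4 * √(k : ℝ) := by linarith
    have hk2z : k ^ 2 * z ≤ k / 2 := by nlinarith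
    nlinarith [mul_le_mul_of_nonneg_left hk2z (log_nonneg one_le_two), log_two_gt_d9]

lemma entH_add_mul_powSum_sub_lt_of_mul_one_sub_le_one {k : ℕ} (hk : 10 ^ 9 ≤ k) {η a : ℝ}
    (hη0 : 0 ≤ η) (hη : η ≤ (2 : ℝ) ^ (-(3 * (k : ℝ) / 4)) / 2) (hka : k * (1 - a) ≤ 1)
    (ha : a ≤ 1 - (2 : ℝ) ^ (-(3 * (k : ℝ) / 4))) :
    entH ((1 + a) / 2) + (log 2 + η) * (powSum k a - powSum k 0) < log 2 := by
  set z := (1 - a) / 2 with hzdef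
  have hz : (2 : ℝ) ^ (-(3 * (k : ℝ) / 4)) / 2 ≤ z := by rw [hzdef]; linarith
  have hz0 : 0 < z := lt_of_lt_of_le (by positivity) hz
  have hK : (10 : ℝ) ^ 9 ≤ k := by exact_mod_cast hk
  have hkz : 2 * k * z ≤ 1 := by rw [hzdef]; linarith
  have hz1 : z < 1 := by nlinarith
  have hnum := mul_lt_mul_of_pos_left (log_inv_add_lt_log_two_mul hk hz hkz) hz0
  have hH : entH ((1 + a) / 2) ≤ z * log z⁻¹ + z := by
    rw [show (1 + a) / 2 = 1 - z by rw [hzdef]; ring, entH_one_sub]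
    exact entH_le_mul_log_inv_add hz1
  have hplus : ((1 + a) / 2) ^ k ≤ 1 - k * z + (k * z) ^ 2 := by
    have := (one_add_pow_le_exp_mul (x := -z) (by linarith) k).trans
      (exp_le_one_add_add_sq (t := k * -z) (by rw [abs_le]; constructor <;> nlinarith))
    rwa [show 1 + -z = (1 + a) / 2 by rw [hzdef]; ring, mul_neg, neg_sq, ← sub_eq_add_neg] at this
  have hminus : z ^ k ≤ z := pow_le_of_le_one hz0.le hz1.le (by omega)
  have hS1 := powSum_le_one (k := k) (by omega) (α := a) (abs_le.2 ⟨by linarith, by linarith⟩)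
  have hq := powSum_zero_nonneg k
  have hS : powSum k a - powSum k 0 ≤ 1 - k * z + (k * z) ^ 2 + z := by
    rw [powSum, ← hzdef]; linarith
  have hlog2 := mul_le_mul_of_nonneg_left hS (log_nonneg one_le_two)
  have hηS := mul_le_of_le_one_right hη0 (show powSum k a - powSum k 0 ≤ 1 by linarith)
  have hlog2z := mul_le_of_le_one_left hz0.le (show log 2 ≤ 1 by linarith [log_two_lt_d9])
  linarith

lemma entH_add_mul_powSum_sub_lt {k : ℕ} (hk : 10 ^ 9 ≤ k) {η α : ℝ} (hη0 : 0 ≤ η)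
    (hη : η ≤ (2 : ℝ) ^ (-(3 * (k : ℝ) / 4)) / 2) (hα0 : α ≠ 0)
    (hα : |α| ≤ 1 - (2 : ℝ) ^ (-(3 * (k : ℝ) / 4))) :
    entH ((1 + α) / 2) + (log 2 + η) * (powSum k α - powSum k 0) < log 2 := by
  rw [← entH_one_add_abs_div_two, ← powSum_abs]
  have hK : (10 : ℝ) ^ 9 ≤ k := by exact_mod_cast hk
  have hη1 : η ≤ 1 / 1000 := by
    refine hη.trans ?_
    have : (2 : ℝ) ^ (-(3 * (k : ℝ) / 4)) ≤ 2 ^ (-10 : ℝ) :=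
      rpow_le_rpow_of_exponent_le one_le_two (by linarith)
    norm_num [rpow_neg] at this ⊢
    linarith
  have ha0 := abs_pos.2 hα0
  rcases le_or_gt (k * |α|) 1 with h₁ | h₁
  · exact entH_add_mul_powSum_sub_lt_of_mul_le_one (by omega) hη0
      (by linarith [log_two_lt_d9]) ha0 h₁
  rcases le_or_gt |α| (49 / 50) with h₂ | h₂
  · exact entH_add_mul_powSum_sub_lt_of_le hk hη0 (by linarith) h₁ h₂
  rcases lt_or_ge 1 (k * (1 - |α|)) with h₃ | h₃
  · exact entH_add_mul_powSum_sub_lt_of_lt_mul_one_sub hη0 hη1 h₂.le h₃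
  · exact entH_add_mul_powSum_sub_lt_of_mul_one_sub_le_one hk hη0 hη h₃ hα

theorem statement_11 (C : ℝ) (hC : 0 < C) :
    ∃ k0 : ℕ, ∀ k : ℕ, k0 ≤ k → ∀ d : ℝ, 0 < d →
      |d / k - (2:ℝ) ^ (k - 1) * Real.log 2| ≤ C → ∀ β : ℝ, 0 ≤ β →
      ∀ α : ℝ, α ≠ 0 → |α| ≤ 1 - (2:ℝ) ^ (-(3 * (k:ℝ) / 4)) →
        Lam k d β α < Lam k d β 0 := by
  refine ⟨10 ^ 9 + 48 * ⌈C⌉₊, fun k hk d hd hdC β hβ α hα0 hα => ?_⟩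
  have hk9 : 10 ^ 9 ≤ k := by omega
  have hkC : 24 * (2 * C + 3) ≤ k := by
    have : (10 ^ 9 + 48 * ⌈C⌉₊ : ℕ) ≤ (k : ℝ) := by exact_mod_cast hk
    push_cast at this
    linarith [Nat.le_ceil C]
  have hα1 : |α| ≤ 1 := hα.trans (sub_le_self _ (by positivity))
  have hred := Lam_sub_Lam_zero_le (k := k) (by omega) hd.le hβ hα1
  have hcoef := div_mul_le_log_two_add (by omega) hC.le hdC
  have hgap := entH_add_mul_powSum_sub_lt hk9 (by positivity)
    (mul_two_zpow_le_two_rpow_div_two hkC) hα0 hα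
  have hS := sub_nonneg.2 (powSum_zero_le k hα1)
  linarith [mul_le_mul_of_nonneg_right hcoef hS]
end
end
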